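/- arXiv:math/0405443 — 6 statements merged into one kernel-verified Lean document; each statement's English description precedes it below -/
import Mathlib

section
/- Let H₁ and H₂ be complex Hilbert spaces, T : H₁ → H₂ a bounded linear operator, and λ > 0. If the spectrum of T† ∘ T on H₁ is contained in the real ray [λ², ∞), then the range of the adjoint operator T† : H₂ → H₁ is a closed subspace of H₁. -/
open ContinuousLinearMap

theorem spectrum.isUnit_of_subset_ofReal_Ici {A : Type*} [Ring A] [Algebra ℂ A] {a : A} {c : ℝ}
    (hc : 0 < c) (h : spectrum ℂ a ⊆ Complex.ofReal '' Set.Ici c) : IsUnit a := by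
  refine spectrum.isUnit_of_zero_notMem ℂ fun h0 => ?_
  obtain ⟨x, hcx, hx0⟩ := h h0
  exact (hc.trans_le hcx).ne' (by exact_mod_cast hx0)

theorem ContinuousLinearMap.surjective_of_isUnit_comp {R E F : Type*} [Semiring R]
    [TopologicalSpace E] [AddCommMonoid E] [Module R E] [ContinuousAdd E]
    [TopologicalSpace F] [AddCommMonoid F] [Module R F]
    {S : F →L[R] E} {T : E →L[R] F} (h : IsUnit (S ∘L T)) : Function.Surjective S :=
  Function.Surjective.of_comp (g := T) <|
    ((Module.End.isUnit_iff _).mp (h.map ContinuousLinearMap.toLinearMapRingHom)).surjective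

/-- If the spectrum of `T† ∘ T` is contained in the real ray
`[λ², ∞)` for some `λ > 0`, then the range of the adjoint `T† : H₂ → H₁` is
a closed subspace of `H₁`. -/
theorem spectral_gap_adjoint_closed_range
    {H₁ H₂ : Type*}
    [NormedAddCommGroup H₁] [InnerProductSpace ℂ H₁] [CompleteSpace H₁]
    [NormedAddCommGroup H₂] [InnerProductSpace ℂ H₂] [CompleteSpace H₂]
    (T : H₁ →L[ℂ] H₂) (lam : ℝ) (hlam : 0 < lam)
    (hspec : spectrum ℂ (ContinuousLinearMap.adjoint T ∘L T) ⊆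
      Complex.ofReal '' Set.Ici (lam ^ 2)) :
    IsClosed (Set.range (⇑(ContinuousLinearMap.adjoint T)) : Set H₁) := by
  have hunit := spectrum.isUnit_of_subset_ofReal_Ici (pow_pos hlam 2) hspec
  rw [(surjective_of_isUnit_comp hunit).range_eq]
  exact isClosed_univ
end

section
/- Let H₀, H₁, H₂ be complex Hilbert spaces and let d₀ : H₀ → H₁ and d₁ : H₁ → H₂ be bounded linear operators forming a complex (d₁ ∘ d₀ = 0). Assume: (1) d₀ and d₁ both have closed range; (2) the first cohomology vanishes, i.e. ker d₁ ⊆ range d₀; (3) ker d₀ = {0}. Then there exists λ > 0 such that ‖d₀† u‖² + ‖d₁ u‖² ≥ λ ‖u‖² for every u ∈ H₁ (equivalently, the spectrum of the nonnegative self-adjoint operator d₀ ∘ d₀† + d₁† ∘ d₁ on H₁ is contained in [λ, ∞)). Moreover the adjoint d₁† : H₂ → H₁ has closed range. -/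
/-!
A bounded operator `T` with closed range is bounded below on `(ker T)ᗮ` by the open mapping
theorem. Then `‖T x‖² = ⟪x, T† T x⟫` makes `T†` bounded below on `range T = (ker T†)ᗮ`, and as
`T†` kills `(range T)ᗮ`, the range of `T†` is closed. For the complex,
`ker d₁ = range d₀ = (ker d₀†)ᗮ`, so splitting `u` along `ker d₁ ⊕ (ker d₁)ᗮ` bounds the first
component by `‖d₀† u‖` and the second by `‖d₁ u‖`.
-/

open ContinuousLinearMap Submodule
open scoped InnerProduct

namespace ContinuousLinearMap

variable {𝕜 E F : Type*} [RCLike 𝕜]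
  [NormedAddCommGroup E] [InnerProductSpace 𝕜 E] [CompleteSpace E]
  [NormedAddCommGroup F] [InnerProductSpace 𝕜 F]

theorem apply_starProjection_orthogonal_ker (T : E →L[𝕜] F) (x : E) :
    T ((LinearMap.ker (T : E →ₗ[𝕜] F))ᗮ.starProjection x) = T x := by
  set K := LinearMap.ker (T : E →ₗ[𝕜] F)
  have hK : T (K.starProjection x) = 0 := K.starProjection_apply_mem x
  conv_rhs => rw [← K.starProjection_add_starProjection_orthogonal x]
  rw [map_add, hK, zero_add]

theorem range_comp_subtypeL_orthogonal_ker (T : E →L[𝕜] F) :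
    Set.range (T ∘L (LinearMap.ker (T : E →ₗ[𝕜] F))ᗮ.subtypeL) = Set.range T := by
  refine Set.Subset.antisymm (Set.range_subset_iff.2 fun x ↦ ⟨x, rfl⟩) ?_
  rintro _ ⟨x, rfl⟩
  exact ⟨(LinearMap.ker (T : E →ₗ[𝕜] F))ᗮ.orthogonalProjectionOnto x,
    apply_starProjection_orthogonal_ker T x⟩

variable [CompleteSpace F]

theorem exists_norm_starProjection_orthogonal_ker_le (T : E →L[𝕜] F)
    (hT : IsClosed (Set.range T)) :
    ∃ C > 0, ∀ x, ‖(LinearMap.ker (T : E →ₗ[𝕜] F))ᗮ.starProjection x‖ ≤ C * ‖T x‖ := by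
  set K := LinearMap.ker (T : E →ₗ[𝕜] F)
  have hinj : Function.Injective (T ∘L Kᗮ.subtypeL) := by
    refine (injective_iff_map_eq_zero _).mpr fun x hx ↦ Subtype.ext ?_
    exact K.orthogonal_disjoint.le_bot ⟨hx, x.2⟩
  obtain ⟨C, hC⟩ := (T ∘L Kᗮ.subtypeL).antilipschitz_of_injective_of_isClosed_range hinj
    ((range_comp_subtypeL_orthogonal_ker T).symm ▸ hT)
  refine ⟨C + 1, by positivity, fun x ↦ ?_⟩
  calc ‖Kᗮ.starProjection x‖ = ‖Kᗮ.orthogonalProjectionOnto x‖ := rfl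
    _ ≤ C * ‖T x‖ := by
      refine (hC.le_mul_norm (map_zero _) (Kᗮ.orthogonalProjectionOnto x)).trans_eq ?_
      rw [← apply_starProjection_orthogonal_ker T x]
      rfl
    _ ≤ (C + 1) * ‖T x‖ := by gcongr; linarith

theorem orthogonal_ker_adjoint (T : E →L[𝕜] F) (hT : IsClosed (Set.range T)) :
    (LinearMap.ker (T† : F →ₗ[𝕜] E))ᗮ = LinearMap.range (T : E →ₗ[𝕜] F) := by
  rw [← orthogonal_range, orthogonal_orthogonal_eq_closure]
  exact IsClosed.submodule_topologicalClosure_eq (by rwa [LinearMap.coe_range])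

theorem norm_le_mul_norm_adjoint_of_mem_range (T : E →L[𝕜] F) {C : ℝ}
    (hC : ∀ x, ‖(LinearMap.ker (T : E →ₗ[𝕜] F))ᗮ.starProjection x‖ ≤ C * ‖T x‖)
    {y : F} (hy : y ∈ Set.range T) : ‖y‖ ≤ C * ‖(T†) y‖ := by
  obtain ⟨x, rfl⟩ := hy
  set x' := (LinearMap.ker (T : E →ₗ[𝕜] F))ᗮ.starProjection x
  have key : ‖T x‖ * ‖T x‖ ≤ (C * ‖(T†) (T x)‖) * ‖T x‖ :=
    calc ‖T x‖ * ‖T x‖ = ‖(inner 𝕜 (T x') (T x) : 𝕜)‖ := by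
          rw [apply_starProjection_orthogonal_ker, inner_self_eq_norm_sq_to_K, norm_pow,
            RCLike.norm_ofReal, abs_norm, sq]
      _ = ‖(inner 𝕜 x' ((T†) (T x)) : 𝕜)‖ := by rw [adjoint_inner_right]
      _ ≤ ‖x'‖ * ‖(T†) (T x)‖ := norm_inner_le_norm _ _
      _ ≤ (C * ‖T x‖) * ‖(T†) (T x)‖ := by gcongr; exact hC x
      _ = (C * ‖(T†) (T x)‖) * ‖T x‖ := by ring
  rcases (norm_nonneg (T x)).eq_or_lt with h | h
  · simp [norm_eq_zero.mp h.symm]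
  · exact le_of_mul_le_mul_right key h

theorem isClosed_range_adjoint (T : E →L[𝕜] F) (hT : IsClosed (Set.range T)) :
    IsClosed (Set.range (T†)) := by
  obtain ⟨C, hC, hbound⟩ := exists_norm_starProjection_orthogonal_ker_le T hT
  set R := LinearMap.ker (T† : F →ₗ[𝕜] E)
  have hanti : AntilipschitzWith ⟨C, hC.le⟩ (T† ∘L Rᗮ.subtypeL) := by
    refine antilipschitz_of_bound _ fun y ↦ norm_le_mul_norm_adjoint_of_mem_range T hbound ?_
    exact (orthogonal_ker_adjoint T hT ▸ y.2 : (y : F) ∈ LinearMap.range (T : E →ₗ[𝕜] F))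
  rw [← range_comp_subtypeL_orthogonal_ker]
  exact hanti.isClosed_range (T† ∘L Rᗮ.subtypeL).uniformContinuous

end ContinuousLinearMap

theorem hilbert_complex_spectral_gap_and_adjoint_closed_range_general
    {H₀ H₁ H₂ : Type*}
    [NormedAddCommGroup H₀] [InnerProductSpace ℂ H₀] [CompleteSpace H₀]
    [NormedAddCommGroup H₁] [InnerProductSpace ℂ H₁] [CompleteSpace H₁]
    [NormedAddCommGroup H₂] [InnerProductSpace ℂ H₂] [CompleteSpace H₂]
    (d₀ : H₀ →L[ℂ] H₁) (d₁ : H₁ →L[ℂ] H₂)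
    (hcomplex : d₁ ∘L d₀ = 0)
    (hclosed₀ : IsClosed (Set.range (⇑d₀) : Set H₁))
    (hclosed₁ : IsClosed (Set.range (⇑d₁) : Set H₂))
    (hH1 : (LinearMap.ker (d₁ : H₁ →ₗ[ℂ] H₂) : Set H₁) ⊆ Set.range (⇑d₀)) :
    (∃ lam : ℝ, 0 < lam ∧ ∀ u : H₁,
        lam * ‖u‖ ^ 2 ≤ ‖(ContinuousLinearMap.adjoint d₀) u‖ ^ 2 + ‖d₁ u‖ ^ 2) ∧
      IsClosed (Set.range (⇑(ContinuousLinearMap.adjoint d₁)) : Set H₁) := by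
  set K := LinearMap.ker (d₁ : H₁ →ₗ[ℂ] H₂)
  have hrange : LinearMap.range (d₀ : H₀ →ₗ[ℂ] H₁) = K :=
    le_antisymm (by rintro _ ⟨x, rfl⟩; exact DFunLike.congr_fun hcomplex x) fun _ hx ↦ hH1 hx
  obtain ⟨a, ha, hv⟩ := exists_norm_starProjection_orthogonal_ker_le (d₀†)
    (isClosed_range_adjoint d₀ hclosed₀)
  obtain ⟨b, hb, hw⟩ := exists_norm_starProjection_orthogonal_ker_le d₁ hclosed₁
  simp only [orthogonal_ker_adjoint d₀ hclosed₀, hrange] at hv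
  set m := max a b
  refine ⟨⟨(m ^ 2)⁻¹, by positivity, fun u ↦ ?_⟩, isClosed_range_adjoint d₁ hclosed₁⟩
  rw [inv_mul_le_iff₀ (by positivity), norm_sq_eq_add_norm_sq_starProjection u K]
  calc ‖K.starProjection u‖ ^ 2 + ‖Kᗮ.starProjection u‖ ^ 2
      ≤ (m * ‖(d₀†) u‖) ^ 2 + (m * ‖d₁ u‖) ^ 2 := by
        gcongr
        · exact (hv u).trans (by gcongr; exact le_max_left a b)
        · exact (hw u).trans (by gcongr; exact le_max_right a b)
    _ = m ^ 2 * (‖(d₀†) u‖ ^ 2 + ‖d₁ u‖ ^ 2) := by ring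

/-- For a two-step Hilbert complex `d₀ : H₀ → H₁`,
`d₁ : H₁ → H₂` with closed ranges, vanishing first cohomology
(`ker d₁ ⊆ range d₀`) and `ker d₀ = 0`, there is `λ > 0` with
`‖d₀† u‖² + ‖d₁ u‖² ≥ λ ‖u‖²` for all `u ∈ H₁`; moreover `d₁†` has
closed range. -/
theorem hilbert_complex_spectral_gap_and_adjoint_closed_range
    {H₀ H₁ H₂ : Type*}
    [NormedAddCommGroup H₀] [InnerProductSpace ℂ H₀] [CompleteSpace H₀]
    [NormedAddCommGroup H₁] [InnerProductSpace ℂ H₁] [CompleteSpace H₁]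
    [NormedAddCommGroup H₂] [InnerProductSpace ℂ H₂] [CompleteSpace H₂]
    (d₀ : H₀ →L[ℂ] H₁) (d₁ : H₁ →L[ℂ] H₂)
    (hcomplex : d₁ ∘L d₀ = 0)
    (hclosed₀ : IsClosed (Set.range (⇑d₀) : Set H₁))
    (hclosed₁ : IsClosed (Set.range (⇑d₁) : Set H₂))
    (hH1 : (LinearMap.ker (d₁ : H₁ →ₗ[ℂ] H₂) : Set H₁) ⊆ Set.range (⇑d₀))
    (hker₀ : LinearMap.ker (d₀ : H₀ →ₗ[ℂ] H₁) = ⊥) :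
    (∃ lam : ℝ, 0 < lam ∧ ∀ u : H₁,
        lam * ‖u‖ ^ 2 ≤ ‖(ContinuousLinearMap.adjoint d₀) u‖ ^ 2 + ‖d₁ u‖ ^ 2) ∧
      IsClosed (Set.range (⇑(ContinuousLinearMap.adjoint d₁)) : Set H₁) :=
  hilbert_complex_spectral_gap_and_adjoint_closed_range_general d₀ d₁ hcomplex hclosed₀ hclosed₁ hH1
end

section
/- Let c > 0 and let f : ℝ → ℝ be twice differentiable on [0, ∞), with f(t) ≥ 0 for all t ≥ 0, f bounded on [0, ∞), and f''(t) ≥ c² · f(t) for all t ≥ 0. Then f(t) ≤ f(0) · exp(−c t) for all t ≥ 0. -/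
/-!
Since `f'' ≥ c² f ≥ 0`, `f` is convex, and being bounded it must be nonincreasing: `f' ≤ 0`.
Hence `g = f' + c f` is bounded above, while `g' = f'' + c f' ≥ c g`, so `e^{-ct} g` is
nondecreasing; a positive value of `g` would then grow exponentially, so `g ≤ 0`.
Finally `(e^{ct} f)' = e^{ct} g ≤ 0`, i.e. `e^{ct} f(t) ≤ f(0)`.
-/

open Set Real

theorem Convex.monotoneOn_of_hasDerivWithinAt_nonneg {D : Set ℝ} (hD : Convex ℝ D)
    {f f' : ℝ → ℝ} (hf : ∀ x ∈ D, HasDerivWithinAt f (f' x) D x)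
    (hf'₀ : ∀ x ∈ D, 0 ≤ f' x) : MonotoneOn f D :=
  _root_.monotoneOn_of_hasDerivWithinAt_nonneg hD (fun x hx => (hf x hx).continuousWithinAt)
    (fun x hx => (hf x (interior_subset hx)).mono interior_subset)
    (fun x hx => hf'₀ x (interior_subset hx))

theorem Convex.antitoneOn_of_hasDerivWithinAt_nonpos {D : Set ℝ} (hD : Convex ℝ D)
    {f f' : ℝ → ℝ} (hf : ∀ x ∈ D, HasDerivWithinAt f (f' x) D x)
    (hf'₀ : ∀ x ∈ D, f' x ≤ 0) : AntitoneOn f D :=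
  _root_.antitoneOn_of_hasDerivWithinAt_nonpos hD (fun x hx => (hf x hx).continuousWithinAt)
    (fun x hx => (hf x (interior_subset hx)).mono interior_subset)
    (fun x hx => hf'₀ x (interior_subset hx))

theorem HasDerivWithinAt.exp_mul_mul {u : ℝ → ℝ} {u' : ℝ} {s : Set ℝ} {t : ℝ} (c : ℝ)
    (hu : HasDerivWithinAt u u' s t) :
    HasDerivWithinAt (fun x => Real.exp (c * x) * u x) (Real.exp (c * t) * (u' + c * u t)) s t :=
  (((hasDerivAt_id' t).const_mul c).exp.hasDerivWithinAt.mul hu).congr_deriv (by ring)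

theorem not_bddAbove_image_Ici_of_linear_le {u : ℝ → ℝ} {t₀ k b : ℝ} (hb : 0 < b)
    (h : ∀ t ∈ Ici t₀, k + b * (t - t₀) ≤ u t) : ¬BddAbove (u '' Ici t₀) := by
  rintro ⟨M, hM⟩
  set t := t₀ + (|M - k| + 1) / b
  have ht : t ∈ Ici t₀ := by
    simp only [t, mem_Ici, le_add_iff_nonneg_right]
    positivity
  have hlin : k + b * (t - t₀) = k + |M - k| + 1 := by
    simp only [t]
    field_simp
    ring
  have := hM (mem_image_of_mem u ht)
  linarith [h t ht, le_abs_self (M - k)]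

theorem nonpos_of_monotoneOn_deriv_of_bddAbove {a : ℝ} {f f' : ℝ → ℝ}
    (hf : ∀ t ∈ Ici a, HasDerivWithinAt f (f' t) (Ici a) t) (hf' : MonotoneOn f' (Ici a))
    (hbdd : BddAbove (f '' Ici a)) : ∀ t ∈ Ici a, f' t ≤ 0 := by
  intro t₀ ht₀
  by_contra! hpos
  have hsub : Ici t₀ ⊆ Ici a := Ici_subset_Ici.2 ht₀
  have htangent : MonotoneOn (fun t => f t - f' t₀ * t) (Ici t₀) :=
    (convex_Ici t₀).monotoneOn_of_hasDerivWithinAt_nonneg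
      (fun t ht => ((hf t (hsub ht)).mono hsub).sub ((hasDerivWithinAt_id t _).const_mul _))
      (fun t ht => by simpa using hf' ht₀ (hsub ht) ht)
  refine not_bddAbove_image_Ici_of_linear_le hpos (k := f t₀) (fun t ht => ?_)
    (hbdd.mono (image_mono hsub))
  have := htangent self_mem_Ici ht ht
  simp only at this
  linarith

theorem nonpos_of_mul_le_deriv_of_bddAbove {a c : ℝ} (hc : 0 < c) {u u' : ℝ → ℝ}
    (hu : ∀ t ∈ Ici a, HasDerivWithinAt u (u' t) (Ici a) t)
    (hineq : ∀ t ∈ Ici a, c * u t ≤ u' t) (hbdd : BddAbove (u '' Ici a)) :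
    ∀ t ∈ Ici a, u t ≤ 0 := by
  have hweighted : MonotoneOn (fun t => exp (-c * t) * u t) (Ici a) :=
    (convex_Ici a).monotoneOn_of_hasDerivWithinAt_nonneg (fun t ht => (hu t ht).exp_mul_mul (-c))
      (fun t ht => mul_nonneg (exp_pos _).le (by linarith [hineq t ht]))
  intro t₀ ht₀
  by_contra! hpos
  have hsub : Ici t₀ ⊆ Ici a := Ici_subset_Ici.2 ht₀
  refine not_bddAbove_image_Ici_of_linear_le (mul_pos hc hpos) (k := u t₀) (fun t ht => ?_)
    (hbdd.mono (image_mono hsub))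
  have hmono : exp (-c * t₀) * u t₀ ≤ exp (-c * t) * u t := hweighted ht₀ (hsub ht) ht
  have hgrowth : exp (c * (t - t₀)) * u t₀ ≤ u t :=
    calc exp (c * (t - t₀)) * u t₀ = exp (c * t) * (exp (-c * t₀) * u t₀) := by
          rw [← mul_assoc, ← exp_add]; congr 2; ring
      _ ≤ exp (c * t) * (exp (-c * t) * u t) := by gcongr
      _ = u t := by rw [← mul_assoc, ← exp_add]; simp
  nlinarith [add_one_le_exp (c * (t - t₀))]

/-- If `f : ℝ → ℝ` is twice differentiable on `[0, ∞)`,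
nonnegative and bounded there, and satisfies the differential inequality
`f'' ≥ c² f` with `c > 0`, then `f(t) ≤ f(0) exp(−c t)` for all `t ≥ 0`. -/
theorem differential_inequality_exponential_decay
    (c : ℝ) (hc : 0 < c) (f f' f'' : ℝ → ℝ)
    (hderiv : ∀ t ∈ Set.Ici (0 : ℝ), HasDerivWithinAt f (f' t) (Set.Ici 0) t)
    (hderiv' : ∀ t ∈ Set.Ici (0 : ℝ), HasDerivWithinAt f' (f'' t) (Set.Ici 0) t)
    (hnonneg : ∀ t ∈ Set.Ici (0 : ℝ), 0 ≤ f t)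
    (hbdd : ∃ M : ℝ, ∀ t ∈ Set.Ici (0 : ℝ), f t ≤ M)
    (hineq : ∀ t ∈ Set.Ici (0 : ℝ), c ^ 2 * f t ≤ f'' t) :
    ∀ t ∈ Set.Ici (0 : ℝ), f t ≤ f 0 * Real.exp (-(c * t)) := by
  obtain ⟨M, hM⟩ := hbdd
  have hf'_mono : MonotoneOn f' (Ici 0) :=
    (convex_Ici 0).monotoneOn_of_hasDerivWithinAt_nonneg hderiv'
      (fun t ht => (mul_nonneg (sq_nonneg c) (hnonneg t ht)).trans (hineq t ht))
  have hf'_nonpos : ∀ t ∈ Ici (0 : ℝ), f' t ≤ 0 :=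
    nonpos_of_monotoneOn_deriv_of_bddAbove hderiv hf'_mono ⟨M, forall_mem_image.2 hM⟩
  have hg_nonpos : ∀ t ∈ Ici (0 : ℝ), f' t + c * f t ≤ 0 :=
    nonpos_of_mul_le_deriv_of_bddAbove hc
      (fun t ht => (hderiv' t ht).add ((hderiv t ht).const_mul c))
      (fun t ht => by linear_combination hineq t ht)
      ⟨c * M, forall_mem_image.2 fun t ht => by
        linarith [hf'_nonpos t ht, mul_le_mul_of_nonneg_left (hM t ht) hc.le]⟩
  have hanti : AntitoneOn (fun t => exp (c * t) * f t) (Ici 0) :=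
    (convex_Ici 0).antitoneOn_of_hasDerivWithinAt_nonpos (fun t ht => (hderiv t ht).exp_mul_mul c)
      (fun t ht => mul_nonpos_of_nonneg_of_nonpos (exp_pos _).le (hg_nonpos t ht))
  intro t ht
  have hdecay : exp (c * t) * f t ≤ f 0 := by simpa using hanti self_mem_Ici ht ht
  rw [exp_neg, ← div_eq_mul_inv, le_div_iff₀ (exp_pos _)]
  linarith
end

section
/- Let H be a real Hilbert space, λ > 0, and Q : H → H a bounded linear operator with ⟨Q x, x⟩ ≥ λ ‖x‖² for all x ∈ H. Let u : ℝ → H be continuously differentiable with both t ↦ u(t) and t ↦ u'(t) square-integrable on ℝ (with respect to Lebesgue measure). Then (∫_ℝ ‖−u'(t) + Q(u(t))‖² dt)^{1/2} ≥ λ · (∫_ℝ ‖u(t)‖² dt)^{1/2}. -/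
open scoped RealInnerProductSpace
open MeasureTheory

/-! Pair `-u' + Q u` with `u` and integrate over `ℝ`. The cross term `∫ ⟪u', u⟫ = ½ ∫ (‖u‖²)'`
vanishes because `‖u‖²` and its derivative are integrable on the line, so coercivity gives
`λ ‖u‖²_{L²} ≤ ∫ ⟪-u' + Q u, u⟫`, and Cauchy–Schwarz in `L²` bounds the right-hand side by
`‖-u' + Q u‖_{L²} ‖u‖_{L²}`. -/

namespace MeasureTheory.MemLp

variable {α E : Type*} [MeasurableSpace α] {μ : Measure α}
  [NormedAddCommGroup E] [InnerProductSpace ℝ E] {f g : α → E}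

theorem integral_inner_eq_inner_toLp (hf : MemLp f 2 μ) (hg : MemLp g 2 μ) :
    ∫ x, ⟪f x, g x⟫ ∂μ = ⟪hf.toLp f, hg.toLp g⟫ := by
  rw [L2.inner_def]
  refine integral_congr_ae ?_
  filter_upwards [hf.coeFn_toLp, hg.coeFn_toLp] with x hfx hgx
  rw [hfx, hgx]

theorem integrable_inner (hf : MemLp f 2 μ) (hg : MemLp g 2 μ) :
    Integrable (fun x => ⟪f x, g x⟫) μ :=
  (L2.integrable_inner (hf.toLp f) (hg.toLp g)).congr <| by
    filter_upwards [hf.coeFn_toLp, hg.coeFn_toLp] with x hfx hgx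
    rw [hfx, hgx]

theorem norm_toLp_two_eq_sqrt (hf : MemLp f 2 μ) : ‖hf.toLp f‖ = √(∫ x, ‖f x‖ ^ 2 ∂μ) := by
  rw [← Real.sqrt_sq (norm_nonneg _), ← real_inner_self_eq_norm_sq,
    ← integral_inner_eq_inner_toLp hf hf]
  simp only [real_inner_self_eq_norm_sq]

theorem integral_inner_le_sqrt_mul_sqrt (hf : MemLp f 2 μ) (hg : MemLp g 2 μ) :
    ∫ x, ⟪f x, g x⟫ ∂μ ≤ √(∫ x, ‖f x‖ ^ 2 ∂μ) * √(∫ x, ‖g x‖ ^ 2 ∂μ) := by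
  rw [integral_inner_eq_inner_toLp hf hg, ← norm_toLp_two_eq_sqrt hf, ← norm_toLp_two_eq_sqrt hg]
  exact real_inner_le_norm _ _

end MeasureTheory.MemLp

section DerivOnLine

variable {E : Type*} [NormedAddCommGroup E] [InnerProductSpace ℝ E] {u u' : ℝ → E}

theorem integral_inner_deriv_eq_zero (hderiv : ∀ t, HasDerivAt u (u' t) t) (hu : MemLp u 2)
    (hu' : MemLp u' 2) :
    ∫ t, ⟪u' t, u t⟫ = 0 := by
  have h := integral_eq_zero_of_hasDerivAt_of_integrable (fun t => (hderiv t).norm_sq)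
    ((hu.integrable_inner hu').const_mul 2) ((memLp_two_iff_integrable_sq_norm hu.1).1 hu)
  rw [integral_const_mul] at h
  simpa [real_inner_comm] using h

theorem integral_inner_neg_deriv_add_eq (hderiv : ∀ t, HasDerivAt u (u' t) t) (hu : MemLp u 2)
    (hu' : MemLp u' 2) {v : ℝ → E} (hv : MemLp v 2) :
    ∫ t, ⟪-u' t + v t, u t⟫ = ∫ t, ⟪v t, u t⟫ := by
  simp only [inner_add_left, inner_neg_left]
  rw [integral_add (f := fun t => -⟪u' t, u t⟫) (hu'.integrable_inner hu).neg
    (hv.integrable_inner hu), integral_neg,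
    integral_inner_deriv_eq_zero hderiv hu hu', neg_zero, zero_add]

end DerivOnLine

theorem mul_integral_norm_sq_le_integral_inner_apply {α E : Type*} [MeasurableSpace α]
    {μ : Measure α} [NormedAddCommGroup E] [InnerProductSpace ℝ E] {c : ℝ} {Q : E →L[ℝ] E}
    (hQ : ∀ x, c * ‖x‖ ^ 2 ≤ ⟪Q x, x⟫) {u : α → E} (hu : MemLp u 2 μ) :
    c * ∫ x, ‖u x‖ ^ 2 ∂μ ≤ ∫ x, ⟪Q (u x), u x⟫ ∂μ := by
  rw [← integral_const_mul]
  exact integral_mono (((memLp_two_iff_integrable_sq_norm hu.1).1 hu).const_mul c)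
    ((Q.comp_memLp' hu).integrable_inner hu) fun x => hQ (u x)

theorem mul_le_of_mul_sq_le_mul {c x y : ℝ} (hx : 0 ≤ x) (hy : 0 ≤ y) (h : c * x ^ 2 ≤ y * x) :
    c * x ≤ y := by
  rcases hx.eq_or_lt with rfl | hx
  · simpa using hy
  · exact le_of_mul_le_mul_right (by linarith) hx

theorem cylinder_operator_L2_coercivity_general
    {H : Type*} [NormedAddCommGroup H] [InnerProductSpace ℝ H]
    (lam : ℝ)
    (Q : H →L[ℝ] H)
    (hcoercive : ∀ x : H, lam * ‖x‖ ^ 2 ≤ ⟪Q x, x⟫)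
    (u u' : ℝ → H)
    (hderiv : ∀ t : ℝ, HasDerivAt u (u' t) t)
    (hcont : Continuous u')
    (hu2 : MeasureTheory.Integrable (fun t : ℝ => ‖u t‖ ^ 2))
    (hu'2 : MeasureTheory.Integrable (fun t : ℝ => ‖u' t‖ ^ 2)) :
    lam * Real.sqrt (∫ t : ℝ, ‖u t‖ ^ 2) ≤
      Real.sqrt (∫ t : ℝ, ‖-u' t + Q (u t)‖ ^ 2) := by
  have hu_meas : AEStronglyMeasurable u :=
    (continuous_iff_continuousAt.2 fun t => (hderiv t).continuousAt).aestronglyMeasurable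
  have hu : MemLp u 2 := (memLp_two_iff_integrable_sq_norm hu_meas).2 hu2
  have hu' : MemLp u' 2 := (memLp_two_iff_integrable_sq_norm hcont.aestronglyMeasurable).2 hu'2
  have hQu : MemLp (fun t => Q (u t)) 2 := Q.comp_memLp' hu
  refine mul_le_of_mul_sq_le_mul (Real.sqrt_nonneg _) (Real.sqrt_nonneg _) ?_
  rw [Real.sq_sqrt (integral_nonneg fun t => sq_nonneg _)]
  calc lam * ∫ t, ‖u t‖ ^ 2
      ≤ ∫ t, ⟪Q (u t), u t⟫ := mul_integral_norm_sq_le_integral_inner_apply hcoercive hu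
    _ = ∫ t, ⟪-u' t + Q (u t), u t⟫ := (integral_inner_neg_deriv_add_eq hderiv hu hu' hQu).symm
    _ ≤ _ := (hu'.neg.add hQu).integral_inner_le_sqrt_mul_sqrt hu

/-- (L² coercivity on the cylinder.) If `Q` is a bounded
coercive operator on a real Hilbert space and `u : ℝ → H` is continuously
differentiable with `u` and `u'` square-integrable, then
`‖−u' + Q u‖_{L²} ≥ λ ‖u‖_{L²}`. -/
theorem cylinder_operator_L2_coercivity
    {H : Type*} [NormedAddCommGroup H] [InnerProductSpace ℝ H] [CompleteSpace H]
    (lam : ℝ) (hlam : 0 < lam)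
    (Q : H →L[ℝ] H)
    (hcoercive : ∀ x : H, lam * ‖x‖ ^ 2 ≤ ⟪Q x, x⟫)
    (u u' : ℝ → H)
    (hderiv : ∀ t : ℝ, HasDerivAt u (u' t) t)
    (hcont : Continuous u')
    (hu2 : MeasureTheory.Integrable (fun t : ℝ => ‖u t‖ ^ 2))
    (hu'2 : MeasureTheory.Integrable (fun t : ℝ => ‖u' t‖ ^ 2)) :
    lam * Real.sqrt (∫ t : ℝ, ‖u t‖ ^ 2) ≤
      Real.sqrt (∫ t : ℝ, ‖-u' t + Q (u t)‖ ^ 2) :=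
  cylinder_operator_L2_coercivity_general lam Q hcoercive u u' hderiv hcont hu2 hu'2
end

section
/- Let H be a real Hilbert space, λ > 0, and Q : H → H a bounded self-adjoint linear operator with ⟨Q x, x⟩ ≥ λ ‖x‖² for all x ∈ H. Then for every continuous square-integrable f : ℝ → H there exists a unique continuously differentiable square-integrable u : ℝ → H satisfying −u'(t) + Q(u(t)) = f(t) for all t ∈ ℝ; moreover (∫_ℝ ‖u(t)‖² dt)^{1/2} ≤ λ^{-1} (∫_ℝ ‖f(t)‖² dt)^{1/2}. -/
/-!
The inverse is `u(t) = ∫_t^∞ exp ((t - r) Q) f(r) dr`. Along any solution of `w' = Q w`, coercivity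
makes `‖w t‖² e^{-2λt}` nondecreasing; hence `‖exp (s Q)‖ ≤ e^{λs}` for `s ≤ 0`, and `‖u‖` is
dominated by the convolution of `‖f‖` with `e^{λs} 1_{s ≤ 0}`, whose integral is `λ⁻¹`. Young's
inequality `‖g ⋆ k‖₂ ≤ ‖k‖₁ ‖g‖₂` then gives the `L²` bound. The difference `w` of two solutions
solves `w' = Q w`, so `‖w‖²` is nondecreasing and can only be integrable if `w = 0`.
-/

open MeasureTheory Set Filter NormedSpace
open scoped RealInnerProductSpace Convolution

section WeightedCauchySchwarz

variable {α : Type*} [MeasurableSpace α] {μ : Measure α} {g w : α → ℝ}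

theorem integrable_mul_of_integrable_sq_mul (hw0 : 0 ≤ w) (hw : Integrable w μ)
    (hg : AEStronglyMeasurable g μ) (hgw : Integrable (fun x => g x ^ 2 * w x) μ) :
    Integrable (fun x => g x * w x) μ := by
  refine ((hw.add hgw).div_const 2).mono' (hg.mul hw.aestronglyMeasurable) ?_
  refine Eventually.of_forall fun x => ?_
  rw [norm_mul, Real.norm_of_nonneg (hw0 x), Pi.add_apply, Real.norm_eq_abs, ← sq_abs (g x)]
  nlinarith [mul_nonneg (hw0 x) (sq_nonneg (|g x| - 1))]

theorem sq_integral_mul_le (hw0 : 0 ≤ w) (hw : Integrable w μ)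
    (hgw : Integrable (fun x => g x * w x) μ) (hg2w : Integrable (fun x => g x ^ 2 * w x) μ) :
    (∫ x, g x * w x ∂μ) ^ 2 ≤ (∫ x, w x ∂μ) * ∫ x, g x ^ 2 * w x ∂μ := by
  -- `c ↦ ∫ (g - c)² w` is a nonnegative quadratic polynomial, so its discriminant is `≤ 0`.
  have hquad : ∀ c : ℝ, 0 ≤ (∫ x, w x ∂μ) * (c * c) + (-2 * ∫ x, g x * w x ∂μ) * c
      + ∫ x, g x ^ 2 * w x ∂μ := by
    intro c
    have h : 0 ≤ ∫ x, (g x - c) ^ 2 * w x ∂μ :=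
      integral_nonneg fun x => mul_nonneg (sq_nonneg _) (hw0 x)
    have hexp : ∀ x, (g x - c) ^ 2 * w x = g x ^ 2 * w x - 2 * c * (g x * w x) + c * c * w x :=
      fun x => by ring
    simp_rw [hexp] at h
    rw [integral_add (f := fun x => g x ^ 2 * w x - 2 * c * (g x * w x))
      (hg2w.sub (hgw.const_mul _)) (hw.const_mul _), integral_sub hg2w (hgw.const_mul _),
      integral_const_mul, integral_const_mul] at h
    linarith
  have := discrim_le_zero hquad
  rw [discrim] at this
  linarith

end WeightedCauchySchwarz

theorem integrable_norm_sq_sub {α E : Type*} [MeasurableSpace α] {μ : Measure α}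
    [NormedAddCommGroup E] {u v : α → E} (hu : AEStronglyMeasurable u μ)
    (hv : AEStronglyMeasurable v μ) (hu2 : Integrable (fun x => ‖u x‖ ^ 2) μ)
    (hv2 : Integrable (fun x => ‖v x‖ ^ 2) μ) : Integrable (fun x => ‖(u - v) x‖ ^ 2) μ :=
  (memLp_two_iff_integrable_sq_norm (hu.sub hv)).1
    (((memLp_two_iff_integrable_sq_norm hu).2 hu2).sub
      ((memLp_two_iff_integrable_sq_norm hv).2 hv2))

section ConvolutionSquare

variable {k g : ℝ → ℝ}

theorem integrable_sq_mul_comp_sub {C : ℝ} (hk : Integrable k) (hkC : ∀ s, |k s| ≤ C)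
    (hg2 : Integrable fun x => g x ^ 2) (t : ℝ) :
    Integrable fun r => g r ^ 2 * k (t - r) :=
  hg2.mul_bdd (hk.comp_sub_left t).aestronglyMeasurable
    (Eventually.of_forall fun r => hkC (t - r))

theorem convolutionExistsAt_of_integrable_sq {C : ℝ} (hk0 : 0 ≤ k) (hk : Integrable k)
    (hkC : ∀ s, |k s| ≤ C) (hg : AEStronglyMeasurable g) (hg2 : Integrable fun x => g x ^ 2)
    (t : ℝ) : ConvolutionExistsAt g k t (ContinuousLinearMap.lsmul ℝ ℝ) :=
  integrable_mul_of_integrable_sq_mul (fun r => hk0 (t - r)) (hk.comp_sub_left t) hg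
    (integrable_sq_mul_comp_sub hk hkC hg2 t)

theorem sq_convolution_le {C : ℝ} (hk0 : 0 ≤ k) (hk : Integrable k) (hkC : ∀ s, |k s| ≤ C)
    (hg : AEStronglyMeasurable g) (hg2 : Integrable fun x => g x ^ 2) (t : ℝ) :
    (g ⋆ k) t ^ 2 ≤ (∫ s, k s) * ((fun x => g x ^ 2) ⋆ k) t := by
  simp only [convolution_lsmul, smul_eq_mul]
  rw [← integral_sub_left_eq_self k volume t]
  exact sq_integral_mul_le (fun r => hk0 (t - r)) (hk.comp_sub_left t)
    (convolutionExistsAt_of_integrable_sq hk0 hk hkC hg hg2 t)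
    (integrable_sq_mul_comp_sub hk hkC hg2 t)

/-- Young's inequality `‖g ⋆ k‖₂ ≤ ‖k‖₁ ‖g‖₂`, for functions dominated by such a convolution. -/
theorem integral_norm_sq_le_of_norm_le_convolution {E : Type*} [NormedAddCommGroup E]
    {u : ℝ → E} {C : ℝ} (hu : AEStronglyMeasurable u) (hk0 : 0 ≤ k) (hk : Integrable k)
    (hkC : ∀ s, |k s| ≤ C) (hg : AEStronglyMeasurable g) (hg2 : Integrable fun x => g x ^ 2)
    (hug : ∀ t, ‖u t‖ ≤ (g ⋆ k) t) :
    Integrable (fun t => ‖u t‖ ^ 2) ∧ ∫ t, ‖u t‖ ^ 2 ≤ (∫ s, k s) ^ 2 * ∫ t, g t ^ 2 := by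
  have hpointwise : ∀ t, ‖u t‖ ^ 2 ≤ (∫ s, k s) * ((fun x => g x ^ 2) ⋆ k) t := fun t =>
    (pow_le_pow_left₀ (norm_nonneg _) (hug t) 2).trans (sq_convolution_le hk0 hk hkC hg hg2 t)
  have hconv : Integrable ((fun x => g x ^ 2) ⋆ k) := hg2.integrable_convolution _ hk
  have hu2 : Integrable fun t => ‖u t‖ ^ 2 :=
    (hconv.const_mul _).mono' (hu.norm.pow 2)
      (Eventually.of_forall fun t => by simpa using hpointwise t)
  refine ⟨hu2, ?_⟩
  calc ∫ t, ‖u t‖ ^ 2 ≤ ∫ t, (∫ s, k s) * ((fun x => g x ^ 2) ⋆ k) t :=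
        integral_mono hu2 (hconv.const_mul _) hpointwise
    _ = (∫ s, k s) ^ 2 * ∫ t, g t ^ 2 := by
        rw [integral_const_mul, integral_convolution _ hg2 hk]
        simp only [ContinuousLinearMap.lsmul_apply, smul_eq_mul]
        ring

end ConvolutionSquare

section ExpKernel

noncomputable def expKernel (lam : ℝ) : ℝ → ℝ :=
  (Iic 0).indicator fun s => Real.exp (lam * s)

variable {lam : ℝ}

theorem expKernel_nonneg : 0 ≤ expKernel lam :=
  fun _ => indicator_nonneg (fun _ _ => (Real.exp_pos _).le) _

theorem abs_expKernel_le_one (hlam : 0 ≤ lam) (s : ℝ) : |expKernel lam s| ≤ 1 := by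
  rw [abs_of_nonneg (expKernel_nonneg s), expKernel]
  exact indicator_apply_le'
    (fun hs => Real.exp_le_one_iff.2 (mul_nonpos_of_nonneg_of_nonpos hlam hs)) fun _ => zero_le_one

theorem integrable_expKernel (hlam : 0 < lam) : Integrable (expKernel lam) :=
  (integrable_indicator_iff measurableSet_Iic).2 (integrableOn_exp_mul_Iic hlam 0)

theorem integral_expKernel (hlam : 0 < lam) : ∫ s, expKernel lam s = lam⁻¹ := by
  rw [expKernel, integral_indicator measurableSet_Iic, integral_exp_mul_Iic hlam, mul_zero,
    Real.exp_zero, one_div]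

theorem expKernel_sub_of_le {t r : ℝ} (h : t ≤ r) :
    expKernel lam (t - r) = Real.exp (lam * (t - r)) :=
  indicator_of_mem (show t - r ∈ Iic 0 from sub_nonpos.2 h) _

theorem expKernel_sub_of_lt {t r : ℝ} (h : r < t) : expKernel lam (t - r) = 0 :=
  indicator_of_notMem (show t - r ∉ Iic 0 from not_le.2 (sub_pos.2 h)) _

theorem integrable_norm_mul_expKernel_sub {E : Type*} [NormedAddCommGroup E] {f : ℝ → E}
    (hlam : 0 < lam) (hf : Continuous f) (hf2 : Integrable fun t => ‖f t‖ ^ 2) (t : ℝ) :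
    Integrable fun r => ‖f r‖ * expKernel lam (t - r) :=
  convolutionExistsAt_of_integrable_sq expKernel_nonneg (integrable_expKernel hlam)
    (abs_expKernel_le_one hlam.le) hf.norm.aestronglyMeasurable hf2 t

end ExpKernel

section Exponential

variable {E : Type*} [NormedAddCommGroup E] [NormedSpace ℝ E] [CompleteSpace E]

theorem exp_add_smul (Q : E →L[ℝ] E) (s r : ℝ) :
    exp ((s + r) • Q) = exp (s • Q) * exp (r • Q) := by
  rw [add_smul, exp_add_of_commute_of_mem_ball (𝕂 := ℝ)
    (((Commute.refl Q).smul_left s).smul_right r) (by simp [expSeries_radius_eq_top])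
    (by simp [expSeries_radius_eq_top])]

theorem exp_smul_apply_exp_neg_smul_apply (Q : E →L[ℝ] E) (s : ℝ) (x : E) :
    exp (s • Q) (exp ((-s) • Q) x) = x := by
  rw [← mul_apply_eq_comp, ← exp_add_smul, add_neg_cancel, zero_smul, exp_zero,
    one_apply_eq_self]

theorem continuous_exp_smul (Q : E →L[ℝ] E) : Continuous fun s : ℝ => exp (s • Q) :=
  (differentiable_exp_smul_const ℝ Q).continuous

theorem hasDerivAt_exp_smul_apply (Q : E →L[ℝ] E) (x : E) (t : ℝ) :
    HasDerivAt (fun s : ℝ => exp (s • Q) x) (Q (exp (t • Q) x)) t := by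
  simpa using (hasDerivAt_exp_smul_const' (𝕂 := ℝ) Q t).clm_apply (hasDerivAt_const t x)

theorem hasDerivAt_setIntegral_Ici {φ : ℝ → E} (hφ : Continuous φ)
    (hint : ∀ a, IntegrableOn φ (Ici a)) (t : ℝ) :
    HasDerivAt (fun s => ∫ r in Ici s, φ r) (-φ t) t := by
  have hsplit :
      (fun s => ∫ r in Ici s, φ r) = fun s => (∫ r in Ici 0, φ r) - ∫ r in 0..s, φ r := by
    funext s
    rw [← intervalIntegral.integral_Ici_sub_Ici' (hint 0) (hint s), sub_sub_cancel]
  rw [hsplit]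
  exact (hφ.integral_hasStrictDerivAt 0 t).hasDerivAt.const_sub _

noncomputable def cylinderSolution (Q : E →L[ℝ] E) (f : ℝ → E) (t : ℝ) : E :=
  ∫ r in Ici t, exp ((t - r) • Q) (f r)

theorem hasDerivAt_cylinderSolution (Q : E →L[ℝ] E) {f : ℝ → E} (hf : Continuous f)
    (hint : ∀ t, IntegrableOn (fun r => exp ((t - r) • Q) (f r)) (Ici t)) (t : ℝ) :
    HasDerivAt (cylinderSolution Q f) (Q (cylinderSolution Q f t) - f t) t := by
  set φ : ℝ → E := fun r => exp ((-r) • Q) (f r)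
  have hφ : Continuous φ := ((continuous_exp_smul Q).comp continuous_neg).clm_apply hf
  have hφint : ∀ a, IntegrableOn φ (Ici a) := fun a => by
    refine IntegrableOn.congr_fun ((exp ((-a) • Q)).integrable_comp (hint a))
      (fun r _ => ?_) measurableSet_Ici
    rw [← mul_apply_eq_comp, ← exp_add_smul, show -a + (a - r) = -r by ring]
  have hrepr : cylinderSolution Q f = fun s => exp (s • Q) (∫ r in Ici s, φ r) := by
    funext s
    rw [← ContinuousLinearMap.integral_comp_comm _ (hφint s), cylinderSolution]
    simp only [φ, ← mul_apply_eq_comp, ← exp_add_smul, sub_eq_add_neg]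
  rw [hrepr]
  convert (hasDerivAt_exp_smul_const' (𝕂 := ℝ) Q t).clm_apply
    (hasDerivAt_setIntegral_Ici hφ hφint t) using 1
  simp only [φ, mul_apply_eq_comp, map_neg, exp_smul_apply_exp_neg_smul_apply, sub_eq_add_neg]

end Exponential

section Hilbert

variable {H : Type*} [NormedAddCommGroup H] [InnerProductSpace ℝ H] {lam : ℝ} {Q : H →L[ℝ] H}

theorem monotone_norm_sq_mul_exp (hQ : ∀ x, lam * ‖x‖ ^ 2 ≤ ⟪Q x, x⟫) {w : ℝ → H}
    (hw : ∀ t, HasDerivAt w (Q (w t)) t) :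
    Monotone fun t => ‖w t‖ ^ 2 * Real.exp (-(2 * lam) * t) := by
  have hderiv : ∀ t, HasDerivAt (fun t => ‖w t‖ ^ 2 * Real.exp (-(2 * lam) * t))
      (2 * Real.exp (-(2 * lam) * t) * (⟪Q (w t), w t⟫ - lam * ‖w t‖ ^ 2)) t := fun t =>
    ((hw t).norm_sq.mul ((hasDerivAt_id t).const_mul (-(2 * lam))).exp).congr_deriv (by
      rw [real_inner_comm, id, mul_one]
      ring)
  refine monotone_of_deriv_nonneg (fun t => (hderiv t).differentiableAt) fun t => ?_
  rw [(hderiv t).deriv]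
  exact mul_nonneg (by positivity) (sub_nonneg.2 (hQ (w t)))

theorem norm_exp_smul_apply_le [CompleteSpace H] (hQ : ∀ x, lam * ‖x‖ ^ 2 ≤ ⟪Q x, x⟫) (x : H)
    {s : ℝ} (hs : s ≤ 0) : ‖exp (s • Q) x‖ ≤ Real.exp (lam * s) * ‖x‖ := by
  have hmono := monotone_norm_sq_mul_exp hQ (fun t => hasDerivAt_exp_smul_apply Q x t) hs
  simp only [mul_zero, zero_smul, exp_zero, one_apply_eq_self, Real.exp_zero, mul_one] at hmono
  have hexp : Real.exp (-(2 * lam) * s) * Real.exp (lam * s) ^ 2 = 1 := by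
    rw [sq, ← Real.exp_add, ← Real.exp_add, ← Real.exp_zero]
    ring_nf
  refine (pow_le_pow_iff_left₀ (norm_nonneg _) (by positivity) two_ne_zero).1 ?_
  calc ‖exp (s • Q) x‖ ^ 2
      = ‖exp (s • Q) x‖ ^ 2 * Real.exp (-(2 * lam) * s) * Real.exp (lam * s) ^ 2 := by
        rw [mul_assoc, hexp, mul_one]
    _ ≤ ‖x‖ ^ 2 * Real.exp (lam * s) ^ 2 := by gcongr
    _ = (Real.exp (lam * s) * ‖x‖) ^ 2 := by ring

theorem eq_zero_of_integrable_norm_sq (hQ : ∀ x, 0 ≤ ⟪Q x, x⟫) {w : ℝ → H}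
    (hw : ∀ t, HasDerivAt w (Q (w t)) t) (hw2 : Integrable fun t => ‖w t‖ ^ 2) : w = 0 := by
  have hmono : Monotone fun t => ‖w t‖ ^ 2 := by
    simpa using monotone_norm_sq_mul_exp (lam := 0) (by simpa using hQ) hw
  funext t₀
  by_contra hne
  have hpos : 0 < ‖w t₀‖ ^ 2 := by positivity
  have hconst : IntegrableOn (fun _ => ‖w t₀‖ ^ 2) (Ici t₀) := by
    refine hw2.integrableOn.mono' aestronglyMeasurable_const ?_
    rw [ae_restrict_iff' measurableSet_Ici]
    exact Eventually.of_forall fun t ht => by rw [Real.norm_of_nonneg hpos.le]; exact hmono ht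
  rw [integrableOn_const_iff, Real.volume_Ici, enorm_eq_zero] at hconst
  exact hpos.ne' (hconst.resolve_right (lt_irrefl _))

end Hilbert

section CylinderSolution

variable {H : Type*} [NormedAddCommGroup H] [InnerProductSpace ℝ H] [CompleteSpace H]
  {lam : ℝ} {Q : H →L[ℝ] H} {f : ℝ → H}

theorem norm_exp_smul_sub_apply_le (hQ : ∀ x, lam * ‖x‖ ^ 2 ≤ ⟪Q x, x⟫) {t r : ℝ} (h : t ≤ r) :
    ‖exp ((t - r) • Q) (f r)‖ ≤ ‖f r‖ * expKernel lam (t - r) := by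
  rw [expKernel_sub_of_le h, mul_comm]
  exact norm_exp_smul_apply_le hQ (f r) (sub_nonpos.2 h)

theorem integrableOn_exp_smul_sub_apply (hlam : 0 < lam) (hQ : ∀ x, lam * ‖x‖ ^ 2 ≤ ⟪Q x, x⟫)
    (hf : Continuous f) (hf2 : Integrable fun t => ‖f t‖ ^ 2) (t : ℝ) :
    IntegrableOn (fun r => exp ((t - r) • Q) (f r)) (Ici t) := by
  refine (integrable_norm_mul_expKernel_sub hlam hf hf2 t).integrableOn.mono' ?_
    ((ae_restrict_iff' measurableSet_Ici).2
    (Eventually.of_forall fun r => norm_exp_smul_sub_apply_le hQ))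
  exact ((((continuous_exp_smul Q).comp (continuous_sub_left t)).clm_apply hf)).aestronglyMeasurable

theorem norm_cylinderSolution_le (hlam : 0 < lam) (hQ : ∀ x, lam * ‖x‖ ^ 2 ≤ ⟪Q x, x⟫)
    (hf : Continuous f) (hf2 : Integrable fun t => ‖f t‖ ^ 2) (t : ℝ) :
    ‖cylinderSolution Q f t‖ ≤ ((‖f ·‖) ⋆ expKernel lam) t := by
  simp only [convolution_lsmul, smul_eq_mul]
  rw [← setIntegral_eq_integral_of_forall_compl_eq_zero fun r hr =>
    by rw [expKernel_sub_of_lt (not_le.1 hr), mul_zero]]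
  exact norm_integral_le_of_norm_le (integrable_norm_mul_expKernel_sub hlam hf hf2 t).integrableOn
    ((ae_restrict_iff' measurableSet_Ici).2
      (Eventually.of_forall fun r => norm_exp_smul_sub_apply_le hQ))

end CylinderSolution

theorem cylinder_operator_invertible_general
    {H : Type*} [NormedAddCommGroup H] [InnerProductSpace ℝ H] [CompleteSpace H]
    (lam : ℝ) (hlam : 0 < lam)
    (Q : H →L[ℝ] H)
    (hcoercive : ∀ x : H, lam * ‖x‖ ^ 2 ≤ ⟪Q x, x⟫)
    (f : ℝ → H) (hfcont : Continuous f)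
    (hf2 : MeasureTheory.Integrable (fun t : ℝ => ‖f t‖ ^ 2)) :
    ∃ u u' : ℝ → H,
      (∀ t : ℝ, HasDerivAt u (u' t) t) ∧
      Continuous u' ∧
      MeasureTheory.Integrable (fun t : ℝ => ‖u t‖ ^ 2) ∧
      (∀ t : ℝ, -u' t + Q (u t) = f t) ∧
      Real.sqrt (∫ t : ℝ, ‖u t‖ ^ 2) ≤ lam⁻¹ * Real.sqrt (∫ t : ℝ, ‖f t‖ ^ 2) ∧
      (∀ v v' : ℝ → H,
        (∀ t : ℝ, HasDerivAt v (v' t) t) →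
        Continuous v' →
        MeasureTheory.Integrable (fun t : ℝ => ‖v t‖ ^ 2) →
        (∀ t : ℝ, -v' t + Q (v t) = f t) →
        v = u) := by
  set u := cylinderSolution Q f
  have hu : ∀ t, HasDerivAt u (Q (u t) - f t) t := hasDerivAt_cylinderSolution Q hfcont
    (integrableOn_exp_smul_sub_apply hlam hcoercive hfcont hf2)
  have hucont : Continuous u := continuous_iff_continuousAt.2 fun t => (hu t).continuousAt
  obtain ⟨hu2, hL2⟩ := integral_norm_sq_le_of_norm_le_convolution hucont.aestronglyMeasurable
    expKernel_nonneg (integrable_expKernel hlam) (abs_expKernel_le_one hlam.le)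
    hfcont.norm.aestronglyMeasurable hf2 (norm_cylinderSolution_le hlam hcoercive hfcont hf2)
  refine ⟨u, fun t => Q (u t) - f t, hu, by fun_prop, hu2,
    fun t => by rw [neg_sub, sub_add_cancel], ?_, ?_⟩
  · rw [integral_expKernel hlam] at hL2
    calc √(∫ t, ‖u t‖ ^ 2) ≤ √(lam⁻¹ ^ 2 * ∫ t, ‖f t‖ ^ 2) := Real.sqrt_le_sqrt hL2
      _ = lam⁻¹ * √(∫ t, ‖f t‖ ^ 2) := by
        rw [Real.sqrt_mul (by positivity), Real.sqrt_sq (by positivity)]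
  · intro v v' hv _ hv2 hveq
    have hdiff : ∀ t, HasDerivAt (v - u) (Q ((v - u) t)) t := fun t =>
      ((hv t).sub (hu t)).congr_deriv (by rw [Pi.sub_apply, map_sub, ← hveq t]; abel)
    have hQ : ∀ x, 0 ≤ ⟪Q x, x⟫ := fun x =>
      (mul_nonneg hlam.le (sq_nonneg _)).trans (hcoercive x)
    have hvcont : Continuous v := continuous_iff_continuousAt.2 fun t => (hv t).continuousAt
    exact sub_eq_zero.1 (eq_zero_of_integrable_norm_sq hQ hdiff
      (integrable_norm_sq_sub hvcont.aestronglyMeasurable hucont.aestronglyMeasurable hv2 hu2))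

/-- (Invertibility of `P = −d/dt + Q` on the cylinder.)
If `Q` is a bounded self-adjoint coercive operator on a real Hilbert space,
then for every continuous square-integrable `f : ℝ → H` there is a unique
continuously differentiable square-integrable `u` with `−u' + Q u = f`,
and `‖u‖_{L²} ≤ λ⁻¹ ‖f‖_{L²}`. -/
theorem cylinder_operator_invertible
    {H : Type*} [NormedAddCommGroup H] [InnerProductSpace ℝ H] [CompleteSpace H]
    (lam : ℝ) (hlam : 0 < lam)
    (Q : H →L[ℝ] H)
    (hsa : ∀ x y : H, ⟪Q x, y⟫ = ⟪x, Q y⟫)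
    (hcoercive : ∀ x : H, lam * ‖x‖ ^ 2 ≤ ⟪Q x, x⟫)
    (f : ℝ → H) (hfcont : Continuous f)
    (hf2 : MeasureTheory.Integrable (fun t : ℝ => ‖f t‖ ^ 2)) :
    ∃ u u' : ℝ → H,
      (∀ t : ℝ, HasDerivAt u (u' t) t) ∧
      Continuous u' ∧
      MeasureTheory.Integrable (fun t : ℝ => ‖u t‖ ^ 2) ∧
      (∀ t : ℝ, -u' t + Q (u t) = f t) ∧
      Real.sqrt (∫ t : ℝ, ‖u t‖ ^ 2) ≤ lam⁻¹ * Real.sqrt (∫ t : ℝ, ‖f t‖ ^ 2) ∧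
      (∀ v v' : ℝ → H,
        (∀ t : ℝ, HasDerivAt v (v' t) t) →
        Continuous v' →
        MeasureTheory.Integrable (fun t : ℝ => ‖v t‖ ^ 2) →
        (∀ t : ℝ, -v' t + Q (v t) = f t) →
        v = u) :=
  cylinder_operator_invertible_general lam hlam Q hcoercive f hfcont hf2
end

section
/- Let H be a complex Hilbert space, A : H → H a bounded self-adjoint operator, and λ > 0 such that the spectrum of A contains no point whose real part has absolute value less than λ (i.e. Spec(A) ∩ (−λ, λ) = ∅, the spectrum being real). Suppose u : [0, ∞) → H is differentiable with u'(t) = −A(u(t)) for all t ≥ 0, and there exist C ≥ 0 and 0 ≤ ε < λ with ‖u(t)‖ ≤ C e^{ε t} for all t ≥ 0. Then ‖u(t)‖ ≤ e^{−λ t} · ‖u(0)‖ for all t ≥ 0. -/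
/-!
Let `P = 1_{(-∞,0)}(A)` be the spectral projection onto the negative spectrum; it commutes with
`A`, so `P u` solves the same equation. On the range of `P` the gap gives
`re ⟪A x, x⟫ ≤ -λ ‖x‖²`, hence `e^{-2λt} ‖P u(t)‖²` is nondecreasing; since `‖P u(t)‖²` grows at
most like `e^{2εt}` with `ε < λ`, this forces `P u = 0`. Then `u(t)` lies in the range of `1 - P`,
where `re ⟪A x, x⟫ ≥ λ ‖x‖²`, so `e^{2λt} ‖u(t)‖²` is nonincreasing.
-/

open Set Real RCLike
open scoped InnerProductSpace

theorem antitoneOn_exp_neg_mul_mul_of_hasDerivWithinAt_le {D : Set ℝ} (hD : Convex ℝ D)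
    {g g' : ℝ → ℝ} {c : ℝ} (hg : ∀ t ∈ D, HasDerivWithinAt g (g' t) D t)
    (hle : ∀ t ∈ interior D, g' t ≤ c * g t) :
    AntitoneOn (fun t => exp (-(c * t)) * g t) D := by
  have hderiv : ∀ t ∈ D, HasDerivWithinAt (fun t => exp (-(c * t)) * g t)
      (exp (-(c * t)) * (g' t - c * g t)) D t := fun t ht => by
    have hexp : HasDerivWithinAt (fun t => exp (-(c * t))) (exp (-(c * t)) * -c) D t := by
      simpa using ((hasDerivAt_id t).const_mul c).neg.exp.hasDerivWithinAt
    exact (hexp.mul (hg t ht)).congr_deriv (by ring)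
  refine antitoneOn_of_hasDerivWithinAt_nonpos hD
    (fun t ht => (hderiv t ht).continuousWithinAt)
    (fun t ht => (hderiv t (interior_subset ht)).mono interior_subset) fun t ht => ?_
  exact mul_nonpos_of_nonneg_of_nonpos (exp_pos _).le (sub_nonpos.mpr (hle t ht))

theorem nonpos_of_mul_le_hasDerivWithinAt_of_le_mul_exp {g g' : ℝ → ℝ} {c b K : ℝ}
    (hg : ∀ t ∈ Ici 0, HasDerivWithinAt g (g' t) (Ici 0) t)
    (hge : ∀ t ∈ Ioi 0, c * g t ≤ g' t) (hbound : ∀ t ∈ Ici 0, g t ≤ K * exp (b * t))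
    (hbc : b < c) : ∀ t ∈ Ici 0, g t ≤ 0 := by
  intro s hs
  have hmono : MonotoneOn (fun t => exp (-(c * t)) * g t) (Ici 0) := by
    have := antitoneOn_exp_neg_mul_mul_of_hasDerivWithinAt_le (convex_Ici 0) (c := c)
      (fun t ht => (hg t ht).neg) (fun t ht => by
        rw [interior_Ici] at ht
        simp only [Pi.neg_apply]
        linarith [hge t ht])
    exact fun a ha b hb hab => by simpa using this ha hb hab
  have hlim : Filter.Tendsto (fun t => K * exp ((b - c) * t)) Filter.atTop (nhds 0) := by
    simpa using ((tendsto_exp_atBot.comp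
      (Filter.tendsto_id.const_mul_atTop_of_neg (sub_neg.mpr hbc))).const_mul K)
  refine nonpos_of_mul_nonpos_right ?_ (exp_pos (-(c * s)))
  refine ge_of_tendsto hlim (Filter.eventually_atTop.mpr ⟨s, fun t hst => ?_⟩)
  calc exp (-(c * s)) * g s ≤ exp (-(c * t)) * g t := hmono hs (hs.out.trans hst) hst
    _ ≤ exp (-(c * t)) * (K * exp (b * t)) :=
      mul_le_mul_of_nonneg_left (hbound t (hs.out.trans hst)) (exp_pos _).le
    _ = K * exp ((b - c) * t) := by
      rw [mul_left_comm, ← exp_add]; ring_nf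

section Evolution

variable {E : Type*} [NormedAddCommGroup E] [NormedSpace ℝ E]

theorem HasDerivWithinAt.norm_sq_rclike (𝕜 : Type*) [RCLike 𝕜] [InnerProductSpace 𝕜 E]
    {u : ℝ → E} {u' : E} {s : Set ℝ} {t : ℝ} (hu : HasDerivWithinAt u u' s t) :
    HasDerivWithinAt (fun r => ‖u r‖ ^ 2) (2 * re ⟪u', u t⟫_𝕜) s t := by
  have h := (reCLM (K := 𝕜)).hasFDerivAt.comp_hasDerivWithinAt t (hu.inner 𝕜 hu)
  simp only [Function.comp_def, reCLM_apply, inner_self_eq_norm_sq, map_add,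
    inner_re_symm (𝕜 := 𝕜) (u t)] at h
  rwa [two_mul]

variable {𝕜 : Type*} [RCLike 𝕜] [InnerProductSpace 𝕜 E] {A : E →L[𝕜] E} {u : ℝ → E}

theorem norm_le_exp_neg_mul_mul_norm_of_coercive {c : ℝ}
    (hu : ∀ t ∈ Ici (0 : ℝ), HasDerivWithinAt u (-(A (u t))) (Ici 0) t)
    (hcoer : ∀ t ∈ Ici (0 : ℝ), c * ‖u t‖ ^ 2 ≤ re ⟪A (u t), u t⟫_𝕜) :
    ∀ t ∈ Ici (0 : ℝ), ‖u t‖ ≤ exp (-(c * t)) * ‖u 0‖ := by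
  intro t ht
  have hanti := antitoneOn_exp_neg_mul_mul_of_hasDerivWithinAt_le (convex_Ici 0) (c := -(2 * c))
    (fun t ht => (hu t ht).norm_sq_rclike 𝕜) fun s hs => by
      have := hcoer s (interior_subset hs)
      rw [inner_neg_left, map_neg]
      linarith
  have hsq : ‖u t‖ ^ 2 ≤ (exp (-(c * t)) * ‖u 0‖) ^ 2 := by
    have : exp (2 * c * t) * ‖u t‖ ^ 2 ≤ ‖u 0‖ ^ 2 := by
      simpa [neg_mul] using hanti self_mem_Ici ht ht
    calc ‖u t‖ ^ 2 = exp (-(c * t)) ^ 2 * (exp (2 * c * t) * ‖u t‖ ^ 2) := by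
          rw [← mul_assoc, ← exp_nat_mul, ← exp_add]; ring_nf; simp
      _ ≤ exp (-(c * t)) ^ 2 * ‖u 0‖ ^ 2 := by gcongr
      _ = (exp (-(c * t)) * ‖u 0‖) ^ 2 := (mul_pow _ _ _).symm
  exact (pow_le_pow_iff_left₀ (norm_nonneg _) (by positivity) two_ne_zero).mp hsq

theorem eq_zero_of_anticoercive_of_norm_le_exp {c b K : ℝ}
    (hu : ∀ t ∈ Ici (0 : ℝ), HasDerivWithinAt u (-(A (u t))) (Ici 0) t)
    (hanti : ∀ t ∈ Ici (0 : ℝ), re ⟪A (u t), u t⟫_𝕜 ≤ -c * ‖u t‖ ^ 2)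
    (hgrowth : ∀ t ∈ Ici (0 : ℝ), ‖u t‖ ≤ K * exp (b * t)) (hbc : b < c) :
    ∀ t ∈ Ici (0 : ℝ), u t = 0 := by
  have hnonpos := nonpos_of_mul_le_hasDerivWithinAt_of_le_mul_exp
    (c := 2 * c) (b := 2 * b) (K := K ^ 2)
    (fun t ht => (hu t ht).norm_sq_rclike 𝕜)
    (fun t ht => by
      have := hanti t (Ioi_subset_Ici_self ht)
      rw [inner_neg_left, map_neg]
      linarith)
    (fun t ht => by
      calc ‖u t‖ ^ 2 ≤ (K * exp (b * t)) ^ 2 := by gcongr; exact hgrowth t ht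
        _ = K ^ 2 * exp (2 * b * t) := by rw [mul_pow, ← exp_nat_mul]; ring_nf)
    (by linarith)
  exact fun t ht => norm_eq_zero.mp (pow_eq_zero_iff two_ne_zero |>.mp
    (le_antisymm (hnonpos t ht) (sq_nonneg _)))

end Evolution

theorem mul_mul_le_mul_mul_of_ne_zero_imp {a x y : ℝ} (h : a ≠ 0 → x ≤ y) :
    a * x * a ≤ a * y * a := by
  rcases eq_or_ne a 0 with ha | ha
  · simp [ha]
  · nlinarith [h ha, mul_self_nonneg a]

section Loewner

variable {𝕜 E : Type*} [RCLike 𝕜] [NormedAddCommGroup E] [InnerProductSpace 𝕜 E]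

theorem ContinuousLinearMap.re_inner_le_re_inner_of_le {T S : E →L[𝕜] E} (h : T ≤ S)
    (x : E) : re ⟪T x, x⟫_𝕜 ≤ re ⟪S x, x⟫_𝕜 := by
  have := ((ContinuousLinearMap.le_def T S).mp h).re_inner_nonneg_left x
  rwa [sub_apply, inner_sub_left, map_sub, sub_nonneg] at this

theorem IsSelfAdjoint.inner_mul_mul_apply_self [CompleteSpace E] {R : E →L[𝕜] E}
    (hR : IsSelfAdjoint R) (T : E →L[𝕜] E) (x : E) :
    ⟪(R * T * R) x, x⟫_𝕜 = ⟪T (R x), R x⟫_𝕜 :=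
  hR.isSymmetric (T (R x)) x

end Loewner

section Compression

variable {H : Type*} [NormedAddCommGroup H] [InnerProductSpace ℂ H]

theorem re_inner_algebraMap_apply_self (c : ℝ) (z : H) :
    re ⟪algebraMap ℝ (H →L[ℂ] H) c z, z⟫_ℂ = c * ‖z‖ ^ 2 := by
  simp [Algebra.algebraMap_eq_smul_one, ← Complex.ofReal_pow]

variable [CompleteSpace H] {A : H →L[ℂ] H} {φ : ℝ → ℝ}

theorem re_inner_cfc_apply_cfc_le {ψ₁ ψ₂ : ℝ → ℝ}
    (hφ : ContinuousOn φ (spectrum ℝ A)) (hψ₁ : ContinuousOn ψ₁ (spectrum ℝ A))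
    (hψ₂ : ContinuousOn ψ₂ (spectrum ℝ A))
    (h : ∀ x ∈ spectrum ℝ A, φ x * ψ₁ x * φ x ≤ φ x * ψ₂ x * φ x) (y : H) :
    re ⟪cfc ψ₁ A (cfc φ A y), cfc φ A y⟫_ℂ ≤ re ⟪cfc ψ₂ A (cfc φ A y), cfc φ A y⟫_ℂ := by
  have hconj : ∀ ψ, ContinuousOn ψ (spectrum ℝ A) →
      cfc (fun x => φ x * ψ x * φ x) A = cfc φ A * cfc ψ A * cfc φ A := fun ψ hψ => by
    rw [cfc_mul (fun x => φ x * ψ x) φ A (hφ.mul hψ) hφ, cfc_mul φ ψ A hφ hψ]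
  have hle := cfc_mono h (hφ.mul hψ₁ |>.mul hφ) (hφ.mul hψ₂ |>.mul hφ)
  rw [hconj ψ₁ hψ₁, hconj ψ₂ hψ₂] at hle
  have hφsa : IsSelfAdjoint (cfc φ A) := cfc_predicate φ A
  simpa only [hφsa.inner_mul_mul_apply_self] using
    ContinuousLinearMap.re_inner_le_re_inner_of_le hle y

theorem re_inner_apply_cfc_le (hA : IsSelfAdjoint A) (hφ : ContinuousOn φ (spectrum ℝ A))
    {c : ℝ} (hc : ∀ x ∈ spectrum ℝ A, φ x ≠ 0 → x ≤ c) (y : H) :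
    re ⟪A (cfc φ A y), cfc φ A y⟫_ℂ ≤ c * ‖cfc φ A y‖ ^ 2 := by
  have := re_inner_cfc_apply_cfc_le hφ continuousOn_id continuousOn_const (ψ₂ := fun _ => c)
    (fun x hx => mul_mul_le_mul_mul_of_ne_zero_imp (hc x hx)) y
  rwa [cfc_id ℝ A, cfc_const c A, re_inner_algebraMap_apply_self] at this

theorem le_re_inner_apply_cfc (hA : IsSelfAdjoint A) (hφ : ContinuousOn φ (spectrum ℝ A))
    {c : ℝ} (hc : ∀ x ∈ spectrum ℝ A, φ x ≠ 0 → c ≤ x) (y : H) :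
    c * ‖cfc φ A y‖ ^ 2 ≤ re ⟪A (cfc φ A y), cfc φ A y⟫_ℂ := by
  have := re_inner_cfc_apply_cfc_le hφ continuousOn_const continuousOn_id (ψ₁ := fun _ => c)
    (fun x hx => mul_mul_le_mul_mul_of_ne_zero_imp (hc x hx)) y
  rwa [cfc_id ℝ A, cfc_const c A, re_inner_algebraMap_apply_self] at this

theorem cfc_apply_apply_comm (hA : IsSelfAdjoint A) (φ : ℝ → ℝ) (y : H) :
    cfc φ A (A y) = A (cfc φ A y) := by
  simpa [cfc_id ℝ A] using congr($((cfc_commute_cfc φ id A).eq) y)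

end Compression

theorem ContinuousOn.indicator_of_disjoint_frontier {α β : Type*} [TopologicalSpace α]
    [TopologicalSpace β] [Zero β] {f : α → β} {s t : Set α} (hf : ContinuousOn f t)
    (hst : Disjoint t (frontier s)) : ContinuousOn (s.indicator f) t := by
  classical
  rw [show s.indicator f = fun a => if a ∈ s then f a else 0 from
    funext fun a => indicator_apply s f a]
  exact ContinuousOn.if (fun a ha => absurd ha.2 (hst.notMem_of_mem_left ha.1))
    (hf.mono inter_subset_left) continuousOn_const

theorem continuousOn_indicator_one_of_le_abs {S s : Set ℝ} {lam : ℝ} (hs : frontier s = {0})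
    (hlam : 0 < lam) (hgap : ∀ x ∈ S, lam ≤ |x|) :
    ContinuousOn (s.indicator (1 : ℝ → ℝ)) S := by
  refine continuousOn_const.indicator_of_disjoint_frontier ?_
  rw [hs, disjoint_singleton_right]
  intro h0
  simpa using hlam.trans_le (hgap 0 h0)

section SpectralGap

variable {H : Type*} [NormedAddCommGroup H] [InnerProductSpace ℂ H] [CompleteSpace H]
  {A : H →L[ℂ] H} {lam : ℝ}

theorem re_inner_apply_cfc_indicator_Iio_le (hA : IsSelfAdjoint A) (hlam : 0 < lam)
    (hgap : ∀ x ∈ spectrum ℝ A, lam ≤ |x|) (y : H) :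
    re ⟪A (cfc ((Iio (0 : ℝ)).indicator 1) A y), cfc ((Iio (0 : ℝ)).indicator 1) A y⟫_ℂ ≤
      -lam * ‖cfc ((Iio (0 : ℝ)).indicator 1) A y‖ ^ 2 := by
  refine re_inner_apply_cfc_le hA
    (continuousOn_indicator_one_of_le_abs frontier_Iio hlam hgap) (fun x hx hx0 => ?_) y
  have := hgap x hx
  rw [abs_of_neg (by simpa using hx0)] at this
  linarith

theorem le_re_inner_apply_of_cfc_indicator_Iio_apply_eq_zero (hA : IsSelfAdjoint A)
    (hlam : 0 < lam) (hgap : ∀ x ∈ spectrum ℝ A, lam ≤ |x|) {y : H}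
    (hy : cfc ((Iio (0 : ℝ)).indicator 1) A y = 0) : lam * ‖y‖ ^ 2 ≤ re ⟪A y, y⟫_ℂ := by
  have hQ : cfc ((Ici (0 : ℝ)).indicator 1) A y = y := by
    have hsum :
        cfc ((Iio (0 : ℝ)).indicator 1) A + cfc ((Ici (0 : ℝ)).indicator 1) A = 1 := by
      rw [← cfc_add (a := A) _ _ (continuousOn_indicator_one_of_le_abs frontier_Iio hlam hgap)
        (continuousOn_indicator_one_of_le_abs frontier_Ici hlam hgap), ← cfc_one ℝ A,
        ← compl_Iio]
      exact cfc_congr fun x _ => indicator_self_add_compl_apply _ _ x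
    simpa [hy] using congr($hsum y)
  rw [← hQ]
  refine le_re_inner_apply_cfc hA
    (continuousOn_indicator_one_of_le_abs frontier_Ici hlam hgap) (fun x hx hx0 => ?_) y
  simpa [abs_of_nonneg (show 0 ≤ x by simpa using hx0)] using hgap x hx

end SpectralGap

theorem selfadjoint_gap_subexponential_implies_decay_general
    {H : Type*} [NormedAddCommGroup H] [InnerProductSpace ℂ H] [CompleteSpace H]
    (A : H →L[ℂ] H) (hA : IsSelfAdjoint A)
    (lam : ℝ) (hlam : 0 < lam)
    (hspec : ∀ z ∈ spectrum ℂ A, ¬ |z.re| < lam)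
    (u : ℝ → H)
    (hu : ∀ t ∈ Set.Ici (0 : ℝ), HasDerivWithinAt u (-(A (u t))) (Set.Ici 0) t)
    (C ε : ℝ) (heps_lt : ε < lam)
    (hgrowth : ∀ t ∈ Set.Ici (0 : ℝ), ‖u t‖ ≤ C * Real.exp (ε * t)) :
    ∀ t ∈ Set.Ici (0 : ℝ), ‖u t‖ ≤ Real.exp (-(lam * t)) * ‖u 0‖ := by
  have hgap : ∀ x ∈ spectrum ℝ A, lam ≤ |x| := fun x hx => by
    simpa using not_lt.mp (hspec x (spectrum.algebraMap_mem ℂ hx))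
  set P := cfc ((Iio (0 : ℝ)).indicator 1) A
  have hPu_deriv :
      ∀ t ∈ Ici (0 : ℝ), HasDerivWithinAt (fun r => P (u r)) (-(A (P (u t)))) (Ici 0) t :=
    fun t ht => by
      simpa [P, Function.comp_def, cfc_apply_apply_comm hA] using
        (P.restrictScalars ℝ).hasFDerivAt.comp_hasDerivWithinAt t (hu t ht)
  have hPu_zero : ∀ t ∈ Ici (0 : ℝ), P (u t) = 0 :=
    eq_zero_of_anticoercive_of_norm_le_exp hPu_deriv
      (fun t _ => re_inner_apply_cfc_indicator_Iio_le hA hlam hgap (u t))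
      (fun t ht => (P.le_opNorm _).trans <| by
        rw [mul_assoc]; exact mul_le_mul_of_nonneg_left (hgrowth t ht) (norm_nonneg P))
      heps_lt
  exact norm_le_exp_neg_mul_mul_norm_of_coercive hu fun t ht =>
    le_re_inner_apply_of_cfc_indicator_Iio_apply_eq_zero hA hlam hgap (hPu_zero t ht)

/-- Let `A` be a bounded self-adjoint operator on a complex
Hilbert space whose spectrum contains no point with `|Re z| < λ`, where
`λ > 0`. If `u' = −A u` on `[0, ∞)` and `u` grows at most like `C e^{ε t}`
for some `0 ≤ ε < λ`, then `‖u(t)‖ ≤ e^{−λ t} ‖u(0)‖` for all `t ≥ 0`. -/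
theorem selfadjoint_gap_subexponential_implies_decay
    {H : Type*} [NormedAddCommGroup H] [InnerProductSpace ℂ H] [CompleteSpace H]
    (A : H →L[ℂ] H) (hA : IsSelfAdjoint A)
    (lam : ℝ) (hlam : 0 < lam)
    (hspec : ∀ z ∈ spectrum ℂ A, ¬ |z.re| < lam)
    (u : ℝ → H)
    (hu : ∀ t ∈ Set.Ici (0 : ℝ), HasDerivWithinAt u (-(A (u t))) (Set.Ici 0) t)
    (C ε : ℝ) (hC : 0 ≤ C) (hε : 0 ≤ ε) (heps_lt : ε < lam)
    (hgrowth : ∀ t ∈ Set.Ici (0 : ℝ), ‖u t‖ ≤ C * Real.exp (ε * t)) :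
    ∀ t ∈ Set.Ici (0 : ℝ), ‖u t‖ ≤ Real.exp (-(lam * t)) * ‖u 0‖ :=
  selfadjoint_gap_subexponential_implies_decay_general A hA lam hlam hspec u hu C ε heps_lt hgrowth
end
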